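/- Let $\gamma>0$, set $\bar\lambda = \frac{1}{4+\gamma^2}$, and let $v:\mathbb{R}\to\mathbb{R}$ be the double-well potential $v(s) = \frac{1}{2}(|s|-1)^2$ for $|s|\ge 1/2$, $v(s) = \frac{1}{4}-\frac{1}{2}s^2$ for $|s|\le 1/2$. Then for every $\lambda\in(0,\bar\lambda]$ and every $s\in\mathbb{R}$, $$\frac{1}{2}\,s\,v'(s) \;\ge\; \lambda\left(v(s) + \frac{\gamma^2}{4}s^2\right) - A_1(\gamma), \qquad\text{where}\quad A_1(\gamma) = \frac{\gamma^4+6\gamma^2+16}{4(\gamma^4+10\gamma^2+24)}.$$ -/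

import Mathlib

open Real Set Filter

/-- The one-dimensional double-well potential. -/
noncomputable def doubleWell (s : ℝ) : ℝ :=
  if |s| ≤ 1 / 2 then 1 / 4 - 1 / 2 * s ^ 2 else 1 / 2 * (|s| - 1) ^ 2

lemma hasDerivAt_inner (s : ℝ) : HasDerivAt (fun x : ℝ => 1 / 4 - 1 / 2 * x ^ 2) (-s) s := by
  have h := ((hasDerivAt_pow 2 s).const_mul (1/2 : ℝ)).const_sub (1/4 : ℝ)
  refine h.congr_deriv ?_
  ring

lemma hasDerivAt_right (s : ℝ) : HasDerivAt (fun x : ℝ => 1 / 2 * (x - 1) ^ 2) (s - 1) s := by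
  have h := (((hasDerivAt_id s).sub_const 1).pow 2).const_mul (1/2 : ℝ)
  refine h.congr_deriv ?_
  simp only [id_eq]
  ring

lemma hasDerivAt_left (s : ℝ) : HasDerivAt (fun x : ℝ => 1 / 2 * (x + 1) ^ 2) (s + 1) s := by
  have h := (((hasDerivAt_id s).add_const 1).pow 2).const_mul (1/2 : ℝ)
  refine h.congr_deriv ?_
  simp only [id_eq]
  ring

lemma abs_half : |(1/2 : ℝ)| ≤ 1/2 := by rw [abs_of_pos] <;> norm_num

lemma abs_neg_half : |(-(1/2) : ℝ)| ≤ 1/2 := by rw [abs_of_neg] <;> norm_num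

lemma dw_ici : ∀ x ∈ Ici (1/2 : ℝ), doubleWell x = 1 / 2 * (x - 1) ^ 2 := by
  intro x hx
  simp only [mem_Ici] at hx
  unfold doubleWell
  rcases eq_or_lt_of_le hx with h | h
  · rw [← h, if_pos abs_half]
    norm_num
  · rw [if_neg, abs_of_pos (by linarith)]
    rw [abs_of_pos (by linarith)]; linarith

lemma dw_iic : ∀ x ∈ Iic (-(1/2) : ℝ), doubleWell x = 1 / 2 * (x + 1) ^ 2 := by
  intro x hx
  simp only [mem_Iic] at hx
  unfold doubleWell
  rcases eq_or_lt_of_le hx with h | h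
  · rw [h, if_pos abs_neg_half]
    norm_num
  · rw [if_neg, abs_of_neg (by linarith)]
    · ring
    · rw [abs_of_neg (by linarith)]; linarith

lemma dw_mid : ∀ x : ℝ, |x| ≤ 1/2 → doubleWell x = 1 / 4 - 1 / 2 * x ^ 2 := by
  intro x hx
  unfold doubleWell
  rw [if_pos hx]

lemma hasDerivAt_doubleWell (s : ℝ) :
    HasDerivAt doubleWell (if |s| ≤ 1/2 then -s else if 0 < s then s - 1 else s + 1) s := by
  rcases lt_trichotomy (|s|) (1/2) with h | h | h
  · rw [if_pos h.le]
    refine (hasDerivAt_inner s).congr_of_eventuallyEq ?_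
    have hev : ∀ᶠ x in nhds s, |x| < 1/2 :=
      (continuous_abs.tendsto s).eventually (eventually_lt_nhds h)
    filter_upwards [hev] with x hx
    exact dw_mid x hx.le
  · -- corner cases s = ±1/2
    rcases (abs_eq (by norm_num : (0:ℝ) ≤ 1/2)).mp h with rfl | rfl
    · rw [if_pos h.le]
      have hR : HasDerivWithinAt doubleWell (-(1/2 : ℝ)) (Ici (1/2 : ℝ)) (1/2) := by
        have h1 := (hasDerivAt_right (1/2)).hasDerivWithinAt (s := Ici (1/2 : ℝ))
        have h2 : HasDerivWithinAt (fun x : ℝ => 1 / 2 * (x - 1) ^ 2) (-(1/2 : ℝ))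
            (Ici (1/2 : ℝ)) (1/2) := by refine h1.congr_deriv ?_; norm_num
        refine h2.congr_of_eventuallyEq ?_ (dw_ici _ (by norm_num))
        filter_upwards [self_mem_nhdsWithin] with x hx using dw_ici x hx
      have hL : HasDerivWithinAt doubleWell (-(1/2 : ℝ)) (Iic (1/2 : ℝ)) (1/2) := by
        have h1 := (hasDerivAt_inner (1/2)).hasDerivWithinAt (s := Iic (1/2 : ℝ))
        refine h1.congr_of_eventuallyEq ?_ (dw_mid _ abs_half)
        have hpos : ∀ᶠ x in nhdsWithin (1/2 : ℝ) (Iic (1/2)), (0:ℝ) < x :=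
          eventually_nhdsWithin_of_eventually_nhds (eventually_gt_nhds (by norm_num))
        filter_upwards [hpos, self_mem_nhdsWithin] with x hx1 hx2
        exact dw_mid x (abs_le.mpr ⟨by linarith, hx2⟩)
      have hU := hL.union hR
      rw [Iic_union_Ici, hasDerivWithinAt_univ] at hU
      exact hU
    · rw [if_pos h.le]
      have hL : HasDerivWithinAt doubleWell (1/2 : ℝ) (Iic (-(1/2) : ℝ)) (-(1/2)) := by
        have h1 := (hasDerivAt_left (-(1/2))).hasDerivWithinAt (s := Iic (-(1/2) : ℝ))
        have h2 : HasDerivWithinAt (fun x : ℝ => 1 / 2 * (x + 1) ^ 2) (1/2 : ℝ)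
            (Iic (-(1/2) : ℝ)) (-(1/2)) := by refine h1.congr_deriv ?_; norm_num
        refine h2.congr_of_eventuallyEq ?_ (dw_iic _ (by norm_num))
        filter_upwards [self_mem_nhdsWithin] with x hx using dw_iic x hx
      have hR : HasDerivWithinAt doubleWell (1/2 : ℝ) (Ici (-(1/2) : ℝ)) (-(1/2)) := by
        have h1 := (hasDerivAt_inner (-(1/2))).hasDerivWithinAt (s := Ici (-(1/2) : ℝ))
        have h2 : HasDerivWithinAt (fun x : ℝ => 1 / 4 - 1 / 2 * x ^ 2) (1/2 : ℝ)
            (Ici (-(1/2) : ℝ)) (-(1/2)) := by refine h1.congr_deriv ?_; norm_num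
        refine h2.congr_of_eventuallyEq ?_ (dw_mid _ abs_neg_half)
        have hneg : ∀ᶠ x in nhdsWithin (-(1/2) : ℝ) (Ici (-(1/2))), x < 0 :=
          eventually_nhdsWithin_of_eventually_nhds (eventually_lt_nhds (by norm_num))
        filter_upwards [hneg, self_mem_nhdsWithin] with x hx1 hx2
        exact dw_mid x (abs_le.mpr ⟨hx2, by linarith⟩)
      have hU := hL.union hR
      rw [Iic_union_Ici, hasDerivWithinAt_univ] at hU
      refine hU.congr_deriv ?_
      norm_num
  · rw [if_neg (not_le.mpr h)]
    rcases lt_or_ge 0 s with hs | hs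
    · rw [if_pos hs]
      have hs' : 1/2 < s := by rwa [abs_of_pos hs] at h
      refine (hasDerivAt_right s).congr_of_eventuallyEq ?_
      filter_upwards [eventually_gt_nhds hs'] with x hx
      exact dw_ici x (mem_Ici.mpr hx.le)
    · rw [if_neg (not_lt.mpr hs)]
      have hs' : s < -(1/2) := by rw [abs_of_nonpos hs] at h; linarith
      refine (hasDerivAt_left s).congr_of_eventuallyEq ?_
      filter_upwards [eventually_lt_nhds hs'] with x hx
      exact dw_iic x (mem_Iic.mpr hx.le)

/-- Dissipativity of the one-dimensional double-well potential: for any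
`λ ∈ (0, 1/(4+γ²)]` and all `s ∈ ℝ`,
`(1/2) s v'(s) ≥ λ (v(s) + (γ²/4) s²) − A₁(γ)`. -/
theorem doubleWell_dissipativity (γ : ℝ) (hγ : 0 < γ) (lam : ℝ)
    (hlam : lam ∈ Set.Ioc (0 : ℝ) (1 / (4 + γ ^ 2))) (s : ℝ) :
    1 / 2 * s * deriv doubleWell s
      ≥ lam * (doubleWell s + γ ^ 2 / 4 * s ^ 2)
        - (γ ^ 4 + 6 * γ ^ 2 + 16) / (4 * (γ ^ 4 + 10 * γ ^ 2 + 24)) := by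
  obtain ⟨hl0, hl1⟩ := hlam
  have h4 : (0:ℝ) < 4 + γ ^ 2 := by positivity
  have h24 : (0:ℝ) < γ ^ 4 + 10 * γ ^ 2 + 24 := by positivity
  rw [(hasDerivAt_doubleWell s).deriv]
  have hdw : 0 ≤ doubleWell s := by
    unfold doubleWell
    split_ifs with h
    · nlinarith [abs_le.mp h, sq_abs s]
    · positivity
  have hX : 0 ≤ doubleWell s + γ ^ 2 / 4 * s ^ 2 := by positivity
  have hlam' : lam * (doubleWell s + γ ^ 2 / 4 * s ^ 2)
      ≤ 1 / (4 + γ ^ 2) * (doubleWell s + γ ^ 2 / 4 * s ^ 2) :=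
    mul_le_mul_of_nonneg_right hl1 hX
  rw [ge_iff_le]
  refine le_trans (sub_le_sub_right hlam' _) ?_
  by_cases h : |s| ≤ 1/2
  · rw [if_pos h, dw_mid s h]
    have hs2 : s^2 ≤ 1/4 := by nlinarith [abs_le.mp h, sq_abs s]
    rw [one_div_mul_eq_div, div_sub_div _ _ h4.ne' (by positivity), div_le_iff₀ (by positivity)]
    nlinarith [sq_nonneg (γ^2 - 2), mul_nonneg (mul_nonneg (by linarith : (0:ℝ) ≤ 1/4 - s^2) (sq_nonneg γ)) (sq_nonneg γ), mul_nonneg (by linarith : (0:ℝ) ≤ 1/4 - s^2) (sq_nonneg γ), mul_nonneg (mul_nonneg (mul_nonneg (by linarith : (0:ℝ) ≤ 1/4 - s^2) (sq_nonneg γ)) (sq_nonneg γ)) (sq_nonneg γ), sq_nonneg γ, mul_nonneg (sq_nonneg (γ^2-2)) (sq_nonneg γ)]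
  · rw [if_neg h]
    push_neg at h
    rcases lt_or_ge 0 s with hs | hs
    · rw [if_pos hs]
      rw [dw_ici s (mem_Ici.mpr (by rw [abs_of_pos hs] at h; linarith))]
      rw [one_div_mul_eq_div, div_sub_div _ _ h4.ne' (by positivity), div_le_iff₀ (by positivity)]
      nlinarith [sq_nonneg ((γ^2 + 6) * s - (γ^2 + 2)), sq_nonneg γ, mul_nonneg (sq_nonneg ((γ^2 + 6) * s - (γ^2 + 2))) (sq_nonneg γ)]
    · rw [if_neg (not_lt.mpr hs)]
      rw [dw_iic s (mem_Iic.mpr (by rw [abs_of_nonpos hs] at h; linarith))]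
      rw [one_div_mul_eq_div, div_sub_div _ _ h4.ne' (by positivity), div_le_iff₀ (by positivity)]
      nlinarith [sq_nonneg ((γ^2 + 6) * s + (γ^2 + 2)), sq_nonneg γ, mul_nonneg (sq_nonneg ((γ^2 + 6) * s + (γ^2 + 2))) (sq_nonneg γ)]
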